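/- arXiv:2305.05482 — 2 statements merged into one kernel-verified Lean document; each statement's English description precedes it below -/
import Mathlib

section
/- Let z, x ∈ ℝⁿ and let g, d ∈ ℝⁿ with g ≠ 0 and g, d linearly independent. Define x̃ := x − (⟨x − z, g⟩/‖g‖₂²)·g, u := ⟨g, d⟩·g − ‖g‖₂²·d, and let x⁺ be an orthogonal projection of z onto the affine set Π := {x + αg + βd : α, β ∈ ℝ}. Then u ≠ 0, x⁺ = x̃ − (⟨x̃ − z, u⟩/‖u‖₂²)·u, and ‖x⁺ − z‖₂² = ‖x̃ − z‖₂² − ⟨x̃ − z, u⟩²/‖u‖₂². -/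
open Matrix

private lemma dp_self_nonneg {n : ℕ} (v : Fin n → ℝ) : 0 ≤ v ⬝ᵥ v :=
  Finset.sum_nonneg fun i _ => mul_self_nonneg (v i)

/-- The key decomposition in the proof of Theorem 4.2: with `g ≠ 0` and `g, d`
linearly independent, `x̃ = x − (⟨x − z, g⟩/‖g‖₂²)g` the projection of `z` onto
the line `x + span{g}`, and `u = ⟨g,d⟩g − ‖g‖₂²d`, the orthogonal projection
`x⁺` of `z` onto the affine set `Π = {x + αg + βd}` satisfies `u ≠ 0`,
`x⁺ = x̃ − (⟨x̃ − z, u⟩/‖u‖₂²)u`, and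
`‖x⁺ − z‖₂² = ‖x̃ − z‖₂² − ⟨x̃ − z, u⟩²/‖u‖₂²`. -/
theorem projection_decomposition
    {n : ℕ} (z x g d : Fin n → ℝ)
    (hg : g ≠ 0)
    (hli : LinearIndependent ℝ ![g, d])
    (xt u xplus : Fin n → ℝ)
    (hxt : xt = x - (((x - z) ⬝ᵥ g) / (g ⬝ᵥ g)) • g)
    (hu : u = (g ⬝ᵥ d) • g - (g ⬝ᵥ g) • d)
    (hmem : ∃ α β : ℝ, xplus = x + α • g + β • d)
    (hmin : ∀ α β : ℝ, (xplus - z) ⬝ᵥ (xplus - z) ≤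
      ((x + α • g + β • d) - z) ⬝ᵥ ((x + α • g + β • d) - z)) :
    u ≠ 0 ∧
      xplus = xt - (((xt - z) ⬝ᵥ u) / (u ⬝ᵥ u)) • u ∧
      (xplus - z) ⬝ᵥ (xplus - z) =
        (xt - z) ⬝ᵥ (xt - z) - ((xt - z) ⬝ᵥ u) ^ 2 / (u ⬝ᵥ u) := by
  have hgg0 : g ⬝ᵥ g ≠ 0 := fun h => hg (dotProduct_self_eq_zero.mp h)
  -- u ≠ 0
  have hune : u ≠ 0 := by
    intro h0
    have h1 : (g ⬝ᵥ d) • g + (-(g ⬝ᵥ g)) • d = 0 := by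
      rw [neg_smul, ← sub_eq_add_neg, ← hu, h0]
    have := (LinearIndependent.pair_iff.mp hli (g ⬝ᵥ d) (-(g ⬝ᵥ g)) h1).2
    exact hgg0 (neg_eq_zero.mp this)
  have huu0 : u ⬝ᵥ u ≠ 0 := fun h => hune (dotProduct_self_eq_zero.mp h)
  -- abbreviations
  set t : ℝ := (xt - z) ⬝ᵥ u with ht
  set c : ℝ := t / (u ⬝ᵥ u) with hc
  set w : Fin n → ℝ := xt - c • u with hw
  -- basic orthogonality facts
  have hxtg : (xt - z) ⬝ᵥ g = 0 := by
    rw [hxt]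
    simp only [sub_dotProduct, smul_dotProduct, smul_eq_mul]
    field_simp
    ring
  have hgu : g ⬝ᵥ u = 0 := by
    rw [hu]
    simp only [dotProduct_sub, dotProduct_smul, smul_eq_mul, dotProduct_comm g d]
    ring
  have hwzu : (w - z) ⬝ᵥ u = 0 := by
    have e0 : w - z = (xt - z) - c • u := by rw [hw]; abel
    rw [e0, sub_dotProduct, smul_dotProduct, smul_eq_mul, ← ht, hc]
    field_simp
    ring
  have hwzg : (w - z) ⬝ᵥ g = 0 := by
    rw [hw]
    have : (xt - c • u - z) = (xt - z) - c • u := by abel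
    rw [this]
    simp only [sub_dotProduct, smul_dotProduct, smul_eq_mul, hxtg,
      dotProduct_comm u g, hgu]
    ring
  have hwzd : (w - z) ⬝ᵥ d = 0 := by
    have h1 : (w - z) ⬝ᵥ u = (g ⬝ᵥ d) * ((w - z) ⬝ᵥ g) - (g ⬝ᵥ g) * ((w - z) ⬝ᵥ d) := by
      rw [hu]
      simp only [dotProduct_sub, dotProduct_smul, smul_eq_mul, dotProduct_comm (w - z) g]
    rw [hwzu, hwzg] at h1
    have : (g ⬝ᵥ g) * ((w - z) ⬝ᵥ d) = 0 := by linarith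
    exact (mul_eq_zero.mp this).resolve_left hgg0
  -- w lies in the plane
  set α' : ℝ := -(((x - z) ⬝ᵥ g) / (g ⬝ᵥ g)) - c * (g ⬝ᵥ d) with hα'
  set β' : ℝ := c * (g ⬝ᵥ g) with hβ'
  have hwplane : w = x + α' • g + β' • d := by
    rw [hw, hxt, hu, hα', hβ']
    funext i
    simp only [Pi.add_apply, Pi.sub_apply, Pi.smul_apply, smul_eq_mul]
    ring
  -- orthogonality of plane directions to w - z
  have key : ∀ α β : ℝ, ((x + α • g + β • d) - w) ⬝ᵥ (w - z) = 0 := by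
    intro α β
    have hdir : (x + α • g + β • d) - w = (α - α') • g + (β - β') • d := by
      rw [hwplane]; funext i
      simp only [Pi.add_apply, Pi.sub_apply, Pi.smul_apply, smul_eq_mul]
      ring
    rw [hdir]
    simp only [add_dotProduct, smul_dotProduct, smul_eq_mul,
      dotProduct_comm g (w - z), dotProduct_comm d (w - z), hwzg, hwzd]
    ring
  -- Pythagorean expansion for any point of the plane
  have pyth : ∀ α β : ℝ, ((x + α • g + β • d) - z) ⬝ᵥ ((x + α • g + β • d) - z) =
      ((x + α • g + β • d) - w) ⬝ᵥ ((x + α • g + β • d) - w) + (w - z) ⬝ᵥ (w - z) := by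
    intro α β
    set p := x + α • g + β • d
    have hsplit : p - z = (p - w) + (w - z) := by abel
    rw [hsplit]
    simp only [add_dotProduct, dotProduct_add]
    have h1 := key α β
    have h2 : (w - z) ⬝ᵥ (p - w) = 0 := by rw [dotProduct_comm]; exact h1
    rw [h1, h2]; ring
  -- xplus = w
  obtain ⟨α, β, hαβ⟩ := hmem
  have hle : (xplus - z) ⬝ᵥ (xplus - z) ≤ (w - z) ⬝ᵥ (w - z) := by
    have := hmin α' β'
    rwa [← hwplane] at this
  have heq : (xplus - z) ⬝ᵥ (xplus - z) =
      (xplus - w) ⬝ᵥ (xplus - w) + (w - z) ⬝ᵥ (w - z) := by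
    rw [hαβ]; exact pyth α β
  have hzero : (xplus - w) ⬝ᵥ (xplus - w) = 0 := by
    have h1 : (xplus - w) ⬝ᵥ (xplus - w) ≤ 0 := by linarith
    exact le_antisymm h1 (dp_self_nonneg _)
  have hxw : xplus = w := by
    have := dotProduct_self_eq_zero.mp hzero
    have h2 : xplus - w = 0 := this
    funext i
    have := congr_fun h2 i
    simpa [sub_eq_zero] using this
  refine ⟨hune, ?_, ?_⟩
  · rw [hxw]
  · rw [hxw]
    have hexp : (w - z) ⬝ᵥ (w - z) =
        (xt - z) ⬝ᵥ (xt - z) - 2 * c * t + c ^ 2 * (u ⬝ᵥ u) := by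
      have e0 : w - z = (xt - z) - c • u := by rw [hw]; abel
      rw [e0]
      simp only [sub_dotProduct, dotProduct_sub, smul_dotProduct, dotProduct_smul,
        smul_eq_mul, dotProduct_comm u (xt - z)]
      rw [dotProduct_comm u xt, dotProduct_comm u z]
      have h1 : xt ⬝ᵥ u - z ⬝ᵥ u = t := by rw [ht, sub_dotProduct]
      linear_combination (-2 * c) * h1
    rw [hexp, hc]
    field_simp
    ring
end

section
/- Let A ∈ ℝ^{m×n}, b ∈ ℝ^m with Ax = b consistent, and let x* be the unique solution of Ax = b lying in Range(Aᵀ). Let S be a measurable random m×q real matrix on a probability space (Ω, 𝓕, P) such that ω ↦ S(ω)S(ω)ᵀ is Bochner integrable, H := E[SSᵀ] is positive definite, and λ_max(AᵀS(ω)S(ω)ᵀA) ≤ λ for P-almost every ω for some λ > 0. Let x ∈ Range(Aᵀ) and d ∈ ℝⁿ, and assume that for P-almost every ω: S(ω)ᵀ(Ax − b) ≠ 0 and the vectors g(ω) := AᵀS(ω)S(ω)ᵀ(Ax − b) and d are linearly independent. For each such ω define L(ω) := ‖S(ω)ᵀ(Ax − b)‖₂²/‖g(ω)‖₂², x̃(ω)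 := x − L(ω)g(ω), u(ω) := ⟨g(ω), d⟩g(ω) − ‖g(ω)‖₂²d, and let x⁺(ω) be the orthogonal projection of x* onto the affine set {x + αg(ω) + βd : α, β ∈ ℝ}. Let γ ∈ [0, 1] be such that ⟨x̃(ω) − x*, u(ω)⟩² ≥ γ·‖x̃(ω) − x*‖₂²·‖u(ω)‖₂² for P-almost every ω. Then ∫ ‖x⁺(ω) − x*‖₂² dP(ω) ≤ (1 − γ)(1 − σ²/λ)·‖x − x*‖₂², where σ² := inf{‖H^{1/2}Av‖₂² : v ∈ Range(Aᵀ), ‖v‖₂ = 1} is the square of the smallest nonzero singular value of H^{1/2}A. -/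
open Matrix MeasureTheory

/-!
Fix `ω` and write `r = Ax − b`, `g = AᵀSSᵀr`. Since `u ∈ span {g, d}`, the plane
`x + span {g, d}` contains the line `x̃ + ℝu`, and the squared distance from `x*` to that line is
`sin²θ ‖x̃ − x*‖² ≤ (1 − γ) ‖x̃ − x*‖²`. As `⟨x − x*, g⟩ = ‖Sᵀr‖²`, the Polyak step is the
projection of `x − x*` orthogonally to `g`, so `‖x̃ − x*‖² = ‖x − x*‖² − ‖Sᵀr‖⁴/‖g‖²`, and
`‖g‖² ≤ λ‖Sᵀr‖²` turns this into `≤ ‖x − x*‖² − ‖Sᵀr‖²/λ`. Taking expectations,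
`E‖Sᵀr‖² = rᵀHr = ‖H^{1/2}A(x − x*)‖² ≥ σ²‖x − x*‖²` because `x − x* ∈ Range(Aᵀ)`.
-/

/-- The sketched residual `Sᵀ(Ax − b)`. -/
noncomputable def sres {m n q : ℕ} (A : Matrix (Fin m) (Fin n) ℝ) (b : Fin m → ℝ)
    (S : Matrix (Fin m) (Fin q) ℝ) (x : Fin n → ℝ) : Fin q → ℝ :=
  Sᵀ.mulVec (A.mulVec x - b)

/-- The stochastic gradient `∇f_S(x) = Aᵀ S Sᵀ (Ax − b)`. -/
noncomputable def sgrad {m n q : ℕ} (A : Matrix (Fin m) (Fin n) ℝ) (b : Fin m → ℝ)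
    (S : Matrix (Fin m) (Fin q) ℝ) (x : Fin n → ℝ) : Fin n → ℝ :=
  Aᵀ.mulVec (S.mulVec (Sᵀ.mulVec (A.mulVec x - b)))

/-- The adaptive (Polyak) step-size `L_adap = ‖Sᵀ(Ax−b)‖₂²/‖∇f_S(x)‖₂²`. -/
noncomputable def Lad {m n q : ℕ} (A : Matrix (Fin m) (Fin n) ℝ) (b : Fin m → ℝ)
    (S : Matrix (Fin m) (Fin q) ℝ) (x : Fin n → ℝ) : ℝ :=
  (sres A b S x ⬝ᵥ sres A b S x) / (sgrad A b S x ⬝ᵥ sgrad A b S x)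

/-- The square root of a positive semidefinite matrix, as `Matrix.PosSemidef.sqrt` was defined
in the older Mathlib (that definition has since been removed). -/
noncomputable def posSemidefSqrt {k : ℕ} {M : Matrix (Fin k) (Fin k) ℝ} (hA : M.PosSemidef) :
    Matrix (Fin k) (Fin k) ℝ :=
  hA.1.eigenvectorUnitary.1 * diagonal ((↑) ∘ Real.sqrt ∘ hA.1.eigenvalues) *
    (star hA.1.eigenvectorUnitary : Matrix (Fin k) (Fin k) ℝ)

section DotProduct

variable {ι : Type*} [Fintype ι]

theorem dotProduct_self_nonneg (v : ι → ℝ) : 0 ≤ v ⬝ᵥ v :=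
  Finset.sum_nonneg fun i _ => mul_self_nonneg (v i)

theorem dotProduct_self_pos {v : ι → ℝ} (hv : v ≠ 0) : 0 < v ⬝ᵥ v :=
  (dotProduct_self_nonneg v).lt_of_ne (Ne.symm (dotProduct_self_eq_zero.not.mpr hv))

theorem dotProduct_sq_le (v w : ι → ℝ) : (v ⬝ᵥ w) ^ 2 ≤ (v ⬝ᵥ v) * (w ⬝ᵥ w) := by
  simpa only [dotProduct, pow_two] using Finset.sum_mul_sq_le_sq_mul_sq Finset.univ v w

theorem dotProduct_add_smul_self (w u : ι → ℝ) (t : ℝ) :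
    (w + t • u) ⬝ᵥ (w + t • u) = w ⬝ᵥ w + 2 * t * (w ⬝ᵥ u) + t ^ 2 * (u ⬝ᵥ u) := by
  simp only [dotProduct_add, add_dotProduct, smul_dotProduct, dotProduct_smul, smul_eq_mul,
    dotProduct_comm u w]
  ring

theorem exists_dotProduct_add_smul_self_le {w u : ι → ℝ} (hu : u ≠ 0) {γ : ℝ}
    (hcos : γ * ((w ⬝ᵥ w) * (u ⬝ᵥ u)) ≤ (w ⬝ᵥ u) ^ 2) :
    ∃ t : ℝ, (w + t • u) ⬝ᵥ (w + t • u) ≤ (1 - γ) * (w ⬝ᵥ w) := by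
  have huu := dotProduct_self_pos hu
  refine ⟨-(w ⬝ᵥ u) / (u ⬝ᵥ u), ?_⟩
  rw [dotProduct_add_smul_self]
  have hmin : γ * (w ⬝ᵥ w) ≤ (w ⬝ᵥ u) ^ 2 / (u ⬝ᵥ u) := by
    rw [le_div_iff₀ huu]; linarith
  have hval : w ⬝ᵥ w + 2 * (-(w ⬝ᵥ u) / (u ⬝ᵥ u)) * (w ⬝ᵥ u) +
      (-(w ⬝ᵥ u) / (u ⬝ᵥ u)) ^ 2 * (u ⬝ᵥ u) = w ⬝ᵥ w - (w ⬝ᵥ u) ^ 2 / (u ⬝ᵥ u) := by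
    field_simp; ring
  linarith

theorem dotProduct_sub_div_smul_self {e g : ι → ℝ} (hg : g ≠ 0) :
    (e - ((e ⬝ᵥ g) / (g ⬝ᵥ g)) • g) ⬝ᵥ (e - ((e ⬝ᵥ g) / (g ⬝ᵥ g)) • g) =
      e ⬝ᵥ e - (e ⬝ᵥ g) ^ 2 / (g ⬝ᵥ g) := by
  have hgg := (dotProduct_self_pos hg).ne'
  simp only [sub_dotProduct, dotProduct_sub, smul_dotProduct, dotProduct_smul, smul_eq_mul,
    dotProduct_comm g e]
  field_simp
  ring

end DotProduct

section Matrix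

variable {ι κ : Type*} [Fintype ι] [Fintype κ]

theorem mulVec_dotProduct_self (B : Matrix ι κ ℝ) (v : κ → ℝ) :
    (B *ᵥ v) ⬝ᵥ (B *ᵥ v) = v ⬝ᵥ (Bᵀ * B) *ᵥ v := by
  rw [← mulVec_mulVec, dotProduct_transpose_mulVec]

theorem mulVec_dotProduct_self_le_of_transpose {B : Matrix ι κ ℝ} {lam : ℝ} (hlam : 0 ≤ lam)
    (hB : ∀ y, y ⬝ᵥ (B * Bᵀ) *ᵥ y ≤ lam * (y ⬝ᵥ y)) (z : κ → ℝ) :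
    (B *ᵥ z) ⬝ᵥ (B *ᵥ z) ≤ lam * (z ⬝ᵥ z) := by
  set g := B *ᵥ z
  have hgg : g ⬝ᵥ g = z ⬝ᵥ Bᵀ *ᵥ g := (dotProduct_transpose_mulVec B z g).symm
  have hBt : (Bᵀ *ᵥ g) ⬝ᵥ (Bᵀ *ᵥ g) ≤ lam * (g ⬝ᵥ g) := by
    simpa only [mulVec_dotProduct_self, transpose_transpose] using hB g
  have hcs := dotProduct_sq_le z (Bᵀ *ᵥ g)
  rw [← hgg] at hcs
  have key : (g ⬝ᵥ g) * (g ⬝ᵥ g) ≤ lam * (z ⬝ᵥ z) * (g ⬝ᵥ g) := by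
    nlinarith [mul_le_mul_of_nonneg_left hBt (dotProduct_self_nonneg z)]
  rcases (dotProduct_self_nonneg g).eq_or_lt with hg | hg
  · rw [← hg]; exact mul_nonneg hlam (dotProduct_self_nonneg z)
  · exact le_of_mul_le_mul_right key hg

end Matrix

section Sketch

variable {m n q : ℕ} (A : Matrix (Fin m) (Fin n) ℝ) (b : Fin m → ℝ)
  (S : Matrix (Fin m) (Fin q) ℝ) (x : Fin n → ℝ)

theorem sgrad_eq_mulVec_sres : sgrad A b S x = (Aᵀ * S) *ᵥ sres A b S x := by
  rw [sgrad, sres, mulVec_mulVec]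

theorem sres_dotProduct_self :
    sres A b S x ⬝ᵥ sres A b S x = (A *ᵥ x - b) ⬝ᵥ (S * Sᵀ) *ᵥ (A *ᵥ x - b) := by
  rw [sres, mulVec_dotProduct_self, transpose_transpose]

theorem sgrad_dotProduct_self_le {lam : ℝ} (hlam : 0 ≤ lam)
    (hlamS : ∀ y, y ⬝ᵥ (Aᵀ * S * Sᵀ * A) *ᵥ y ≤ lam * (y ⬝ᵥ y)) :
    sgrad A b S x ⬝ᵥ sgrad A b S x ≤ lam * (sres A b S x ⬝ᵥ sres A b S x) := by
  rw [sgrad_eq_mulVec_sres]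
  refine mulVec_dotProduct_self_le_of_transpose hlam (fun y => ?_) _
  simpa only [transpose_mul, transpose_transpose, Matrix.mul_assoc] using hlamS y

theorem sub_dotProduct_sgrad {xstar : Fin n → ℝ} (hxs : A *ᵥ xstar = b) :
    (x - xstar) ⬝ᵥ sgrad A b S x = sres A b S x ⬝ᵥ sres A b S x := by
  have hr : A *ᵥ (x - xstar) = A *ᵥ x - b := by rw [mulVec_sub, hxs]
  rw [sgrad, dotProduct_transpose_mulVec, hr, sres, dotProduct_transpose_mulVec]
  exact dotProduct_comm _ _

end Sketch

theorem sq_dist_proj_le_of_cos_sq {m n q : ℕ} {A : Matrix (Fin m) (Fin n) ℝ} {b : Fin m → ℝ}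
    {xstar : Fin n → ℝ} (hxs : A *ᵥ xstar = b) {S : Matrix (Fin m) (Fin q) ℝ} {lam : ℝ}
    (hlam : 0 < lam) (hlamS : ∀ y, y ⬝ᵥ (Aᵀ * S * Sᵀ * A) *ᵥ y ≤ lam * (y ⬝ᵥ y))
    {x d : Fin n → ℝ} (hind : LinearIndependent ℝ ![sgrad A b S x, d]) {γ : ℝ} (hγ : γ ≤ 1)
    {xt u xp : Fin n → ℝ} (hxt : xt = x - Lad A b S x • sgrad A b S x)
    (hu : u = (sgrad A b S x ⬝ᵥ d) • sgrad A b S x - (sgrad A b S x ⬝ᵥ sgrad A b S x) • d)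
    (hcos : γ * (((xt - xstar) ⬝ᵥ (xt - xstar)) * (u ⬝ᵥ u)) ≤ ((xt - xstar) ⬝ᵥ u) ^ 2)
    (hxp : ∀ α β : ℝ, (xp - xstar) ⬝ᵥ (xp - xstar) ≤
      ((x + α • sgrad A b S x + β • d) - xstar) ⬝ᵥ ((x + α • sgrad A b S x + β • d) - xstar)) :
    (xp - xstar) ⬝ᵥ (xp - xstar) ≤
      (1 - γ) * ((x - xstar) ⬝ᵥ (x - xstar) - sres A b S x ⬝ᵥ sres A b S x / lam) := by
  set g := sgrad A b S x
  set z := sres A b S x ⬝ᵥ sres A b S x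
  have hg : g ≠ 0 := by simpa using hind.ne_zero 0
  have hgg := dotProduct_self_pos hg
  have hu0 : u ≠ 0 := by
    rintro rfl
    have := (LinearIndependent.pair_iff.mp hind (g ⬝ᵥ d) (-(g ⬝ᵥ g))
      (by rw [neg_smul, ← sub_eq_add_neg]; exact hu.symm)).2
    exact hgg.ne' (neg_eq_zero.mp this)
  have heg : (x - xstar) ⬝ᵥ g = z := sub_dotProduct_sgrad A b S x hxs
  have hxt' : xt - xstar = (x - xstar) - (((x - xstar) ⬝ᵥ g) / (g ⬝ᵥ g)) • g := by
    rw [hxt, heg, Lad]; module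
  obtain ⟨t, ht⟩ := exists_dotProduct_add_smul_self_le hu0 hcos
  have hline : xt - xstar + t • u =
      (x + (-(z / (g ⬝ᵥ g)) + t * (g ⬝ᵥ d)) • g + (-(t * (g ⬝ᵥ g))) • d) - xstar := by
    rw [hxt, hu, Lad]; module
  have hstep : z / lam ≤ z ^ 2 / (g ⬝ᵥ g) := by
    rw [div_le_div_iff₀ hlam hgg]
    nlinarith [sgrad_dotProduct_self_le A b S x hlam.le hlamS, dotProduct_self_nonneg
      (sres A b S x)]
  calc (xp - xstar) ⬝ᵥ (xp - xstar) ≤ (xt - xstar + t • u) ⬝ᵥ (xt - xstar + t • u) := by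
        rw [hline]; exact hxp _ _
    _ ≤ (1 - γ) * ((xt - xstar) ⬝ᵥ (xt - xstar)) := ht
    _ = (1 - γ) * ((x - xstar) ⬝ᵥ (x - xstar) - z ^ 2 / (g ⬝ᵥ g)) := by
        rw [hxt', dotProduct_sub_div_smul_self hg, heg]
    _ ≤ (1 - γ) * ((x - xstar) ⬝ᵥ (x - xstar) - z / lam) := by gcongr

section Expectation

variable {Ω ι κ : Type*} [MeasurableSpace Ω] {P : Measure Ω} [Fintype ι] [Fintype κ]
  {M : Ω → Matrix ι κ ℝ}

theorem dotProduct_mulVec_eq_sum (v : ι → ℝ) (N : Matrix ι κ ℝ) (w : κ → ℝ) :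
    v ⬝ᵥ N *ᵥ w = ∑ i, ∑ j, v i * w j * N i j := by
  simp only [dotProduct, mulVec, Finset.mul_sum]
  exact Finset.sum_congr rfl fun i _ => Finset.sum_congr rfl fun j _ => by ring

theorem integrable_dotProduct_mulVec (hM : ∀ i j, Integrable (fun ω => M ω i j) P)
    (v : ι → ℝ) (w : κ → ℝ) : Integrable (fun ω => v ⬝ᵥ M ω *ᵥ w) P := by
  simp only [dotProduct_mulVec_eq_sum]
  exact integrable_finsetSum _ fun i _ => integrable_finsetSum _ fun j _ => (hM i j).const_mul _

theorem integral_dotProduct_mulVec (hM : ∀ i j, Integrable (fun ω => M ω i j) P)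
    (v : ι → ℝ) (w : κ → ℝ) :
    ∫ ω, v ⬝ᵥ M ω *ᵥ w ∂P = v ⬝ᵥ (Matrix.of fun i j => ∫ ω, M ω i j ∂P) *ᵥ w := by
  simp only [dotProduct_mulVec_eq_sum]
  rw [integral_finsetSum _ fun i _ =>
    integrable_finsetSum _ fun j _ => (hM i j).const_mul _]
  refine Finset.sum_congr rfl fun i _ => ?_
  rw [integral_finsetSum _ fun j _ => (hM i j).const_mul _]
  exact Finset.sum_congr rfl fun j _ => integral_const_mul _ _

theorem integrable_sres_dotProduct_self {m n q : ℕ} (A : Matrix (Fin m) (Fin n) ℝ)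
    (b : Fin m → ℝ) {S : Ω → Matrix (Fin m) (Fin q) ℝ}
    (hS : ∀ i j, Integrable (fun ω => (S ω * (S ω)ᵀ) i j) P) (x : Fin n → ℝ) :
    Integrable (fun ω => sres A b (S ω) x ⬝ᵥ sres A b (S ω) x) P := by
  simpa only [sres_dotProduct_self] using integrable_dotProduct_mulVec hS _ _

theorem integral_sres_dotProduct_self {m n q : ℕ} (A : Matrix (Fin m) (Fin n) ℝ)
    (b : Fin m → ℝ) {S : Ω → Matrix (Fin m) (Fin q) ℝ}
    (hS : ∀ i j, Integrable (fun ω => (S ω * (S ω)ᵀ) i j) P) {H : Matrix (Fin m) (Fin m) ℝ}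
    (hH : ∀ i j, H i j = ∫ ω, (S ω * (S ω)ᵀ) i j ∂P) (x : Fin n → ℝ) :
    ∫ ω, sres A b (S ω) x ⬝ᵥ sres A b (S ω) x ∂P = (A *ᵥ x - b) ⬝ᵥ H *ᵥ (A *ᵥ x - b) := by
  simp only [sres_dotProduct_self]
  rw [integral_dotProduct_mulVec hS, ← Matrix.ext hH]
  rfl

end Expectation

theorem posSemidefSqrt_transpose {k : ℕ} {M : Matrix (Fin k) (Fin k) ℝ} (hM : M.PosSemidef) :
    (posSemidefSqrt hM)ᵀ = posSemidefSqrt hM := by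
  simp only [posSemidefSqrt, transpose_mul, diagonal_transpose, Matrix.mul_assoc,
    star_eq_conjTranspose, conjTranspose_eq_transpose_of_trivial, transpose_transpose]

theorem posSemidefSqrt_mul_self {k : ℕ} {M : Matrix (Fin k) (Fin k) ℝ} (hM : M.PosSemidef) :
    posSemidefSqrt hM * posSemidefSqrt hM = M := by
  set U := hM.1.eigenvectorUnitary
  set D := diagonal (((↑) : ℝ → ℝ) ∘ Real.sqrt ∘ hM.1.eigenvalues)
  have hU : (star U : Matrix (Fin k) (Fin k) ℝ) * U.1 = 1 := Unitary.coe_star_mul_self U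
  have hD : D * D = diagonal (((↑) : ℝ → ℝ) ∘ hM.1.eigenvalues) := by
    rw [diagonal_mul_diagonal]
    congr 1; funext i
    simp [Real.mul_self_sqrt (hM.eigenvalues_nonneg i)]
  conv_rhs => rw [hM.1.spectral_theorem, Unitary.conjStarAlgAut_apply]
  calc posSemidefSqrt hM * posSemidefSqrt hM
      = U.1 * (D * ((star U : Matrix (Fin k) (Fin k) ℝ) * U.1) * D) * star U.1 := by
        simp only [posSemidefSqrt, Matrix.mul_assoc]; rfl
    _ = _ := by rw [hU, Matrix.mul_one, hD]; rfl

theorem dotProduct_mulVec_eq_posSemidefSqrt {k : ℕ} {M : Matrix (Fin k) (Fin k) ℝ}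
    (hM : M.PosSemidef) (v : Fin k → ℝ) :
    v ⬝ᵥ M *ᵥ v = (posSemidefSqrt hM *ᵥ v) ⬝ᵥ (posSemidefSqrt hM *ᵥ v) := by
  rw [mulVec_dotProduct_self, posSemidefSqrt_transpose, posSemidefSqrt_mul_self]

theorem sInf_mul_dotProduct_self_le {ι κ μ : Type*} [Fintype ι] [Fintype κ] [Fintype μ]
    (A : Matrix κ μ ℝ) (Q : Matrix ι μ ℝ) {v : μ → ℝ} (hv : ∃ y, v = Aᵀ *ᵥ y) :
    sInf {r : ℝ | ∃ v : μ → ℝ, (∃ y, v = Aᵀ *ᵥ y) ∧ v ⬝ᵥ v = 1 ∧ r = (Q *ᵥ v) ⬝ᵥ (Q *ᵥ v)} *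
      (v ⬝ᵥ v) ≤ (Q *ᵥ v) ⬝ᵥ (Q *ᵥ v) := by
  set T := {r : ℝ | ∃ v : μ → ℝ, (∃ y, v = Aᵀ *ᵥ y) ∧ v ⬝ᵥ v = 1 ∧ r = (Q *ᵥ v) ⬝ᵥ (Q *ᵥ v)}
  rcases eq_or_ne v 0 with rfl | hv0
  · simp
  have hvv := dotProduct_self_pos hv0
  set s := Real.sqrt (v ⬝ᵥ v)
  have hs : 0 < s := Real.sqrt_pos.mpr hvv
  have hss : s * s = v ⬝ᵥ v := Real.mul_self_sqrt hvv.le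
  have hbdd : BddBelow T := ⟨0, by rintro r ⟨w, -, -, rfl⟩; exact dotProduct_self_nonneg _⟩
  have hmem : s⁻¹ ^ 2 * ((Q *ᵥ v) ⬝ᵥ (Q *ᵥ v)) ∈ T := by
    obtain ⟨y, rfl⟩ := hv
    refine ⟨s⁻¹ • Aᵀ *ᵥ y, ⟨s⁻¹ • y, (mulVec_smul _ _ _).symm⟩, ?_, ?_⟩
    · simp only [smul_dotProduct, dotProduct_smul, smul_eq_mul, ← hss]
      field_simp
    · simp only [mulVec_smul, smul_dotProduct, dotProduct_smul, smul_eq_mul]; ring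
  calc sInf T * (v ⬝ᵥ v) ≤ s⁻¹ ^ 2 * ((Q *ᵥ v) ⬝ᵥ (Q *ᵥ v)) * (s * s) := by
        rw [hss]; gcongr; exact csInf_le hbdd hmem
    _ = (Q *ᵥ v) ⬝ᵥ (Q *ᵥ v) := by field_simp

theorem ashbm_one_step_expected_error_bound_general
    {m n q : ℕ} (A : Matrix (Fin m) (Fin n) ℝ) (b : Fin m → ℝ)
    (xstar : Fin n → ℝ) (hxs : A.mulVec xstar = b) (hxs' : ∃ y, xstar = Aᵀ.mulVec y)
    {Ω : Type*} [MeasurableSpace Ω] (P : Measure Ω) [IsProbabilityMeasure P]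
    (S : Ω → Matrix (Fin m) (Fin q) ℝ)
    (hSint : ∀ i j, Integrable (fun ω => (S ω * (S ω)ᵀ) i j) P)
    (H : Matrix (Fin m) (Fin m) ℝ)
    (hH : ∀ i j, H i j = ∫ ω, (S ω * (S ω)ᵀ) i j ∂P)
    (hHpd : H.PosDef)
    (lam : ℝ) (hlam : 0 < lam)
    (hlamb : ∀ᵐ ω ∂P, ∀ y : Fin n → ℝ,
      y ⬝ᵥ (Aᵀ * S ω * (S ω)ᵀ * A).mulVec y ≤ lam * (y ⬝ᵥ y))
    (x : Fin n → ℝ) (hx : ∃ y, x = Aᵀ.mulVec y)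
    (d : Fin n → ℝ)
    (hae : ∀ᵐ ω ∂P, sres A b (S ω) x ≠ 0 ∧
      LinearIndependent ℝ ![sgrad A b (S ω) x, d])
    (xt u : Ω → Fin n → ℝ)
    (hxt : ∀ ω, xt ω = x - Lad A b (S ω) x • sgrad A b (S ω) x)
    (hu : ∀ ω, u ω = (sgrad A b (S ω) x ⬝ᵥ d) • sgrad A b (S ω) x -
      (sgrad A b (S ω) x ⬝ᵥ sgrad A b (S ω) x) • d)
    (xplus : Ω → Fin n → ℝ)
    (hproj : ∀ᵐ ω ∂P,
      (∃ α β : ℝ, xplus ω = x + α • sgrad A b (S ω) x + β • d) ∧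
      ∀ α β : ℝ, (xplus ω - xstar) ⬝ᵥ (xplus ω - xstar) ≤
        ((x + α • sgrad A b (S ω) x + β • d) - xstar) ⬝ᵥ
          ((x + α • sgrad A b (S ω) x + β • d) - xstar))
    (γ : ℝ) (hγ : γ ∈ Set.Icc (0 : ℝ) 1)
    (hγae : ∀ᵐ ω ∂P,
      γ * (((xt ω - xstar) ⬝ᵥ (xt ω - xstar)) * (u ω ⬝ᵥ u ω)) ≤
        ((xt ω - xstar) ⬝ᵥ u ω) ^ 2)
    (σ2 : ℝ)
    (hσ2 : σ2 = sInf {r : ℝ | ∃ v : Fin n → ℝ, (∃ y, v = Aᵀ.mulVec y) ∧ v ⬝ᵥ v = 1 ∧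
      r = ((posSemidefSqrt hHpd.posSemidef * A).mulVec v) ⬝ᵥ ((posSemidefSqrt hHpd.posSemidef * A).mulVec v)}) :
    ∫ ω, (xplus ω - xstar) ⬝ᵥ (xplus ω - xstar) ∂P ≤
      (1 - γ) * (1 - σ2 / lam) * ((x - xstar) ⬝ᵥ (x - xstar)) := by
  set e := x - xstar
  have hpt : ∀ᵐ ω ∂P, (xplus ω - xstar) ⬝ᵥ (xplus ω - xstar) ≤
      (1 - γ) * (e ⬝ᵥ e - sres A b (S ω) x ⬝ᵥ sres A b (S ω) x / lam) := by
    filter_upwards [hlamb, hae, hproj, hγae] with ω hlamω haeω hprojω hγω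
    exact sq_dist_proj_le_of_cos_sq hxs hlam hlamω haeω.2 hγ.2 (hxt ω) (hu ω) hγω hprojω.2
  have hσ : σ2 * (e ⬝ᵥ e) ≤ (A *ᵥ x - b) ⬝ᵥ H *ᵥ (A *ᵥ x - b) := by
    rw [← hxs, ← mulVec_sub, dotProduct_mulVec_eq_posSemidefSqrt hHpd.posSemidef,
      mulVec_mulVec, hσ2]
    obtain ⟨y₁, rfl⟩ := hx
    obtain ⟨y₂, rfl⟩ := hxs'
    exact sInf_mul_dotProduct_self_le A _ ⟨y₁ - y₂, (mulVec_sub _ _ _).symm⟩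
  have hZ := (integrable_sres_dotProduct_self A b hSint x).div_const lam
  calc ∫ ω, (xplus ω - xstar) ⬝ᵥ (xplus ω - xstar) ∂P
      ≤ ∫ ω, (1 - γ) * (e ⬝ᵥ e - sres A b (S ω) x ⬝ᵥ sres A b (S ω) x / lam) ∂P :=
        integral_mono_of_nonneg (.of_forall fun _ => dotProduct_self_nonneg _)
          (((integrable_const _).sub hZ).const_mul _) hpt
    _ = (1 - γ) * (e ⬝ᵥ e - (A *ᵥ x - b) ⬝ᵥ H *ᵥ (A *ᵥ x - b) / lam) := by
        rw [integral_const_mul, integral_sub (integrable_const _) hZ, integral_div,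
          integral_sres_dotProduct_self A b hSint hH]
        simp
    _ ≤ (1 - γ) * (e ⬝ᵥ e - σ2 * (e ⬝ᵥ e) / lam) := by
        have : 0 ≤ 1 - γ := sub_nonneg.mpr hγ.2
        gcongr
    _ = (1 - γ) * (1 - σ2 / lam) * (e ⬝ᵥ e) := by ring

/-- Theorem 4.2 (one-step convergence of the ASHBM method): with `H = E[S Sᵀ]`
positive definite, `λ` an a.s. bound on `λ_max(Aᵀ S Sᵀ A)`, `x ∈ Range(Aᵀ)`,
`d` the momentum direction, `x⁺(ω)` the orthogonal projection of the solution
`x* ∈ Range(Aᵀ)` onto `Π(ω) = {x + α g(ω) + β d}`, and `γ ∈ [0,1]` an a.s. lower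
bound on `cos²θ(ω)` (the angle between `x̃(ω) − x*` and `u(ω)`), one has
`E[‖x⁺ − x*‖₂²] ≤ (1 − γ)(1 − σ²/λ)‖x − x*‖₂²`, where `σ²` is the square of the
smallest nonzero singular value of `H^{1/2}A`. -/
theorem ashbm_one_step_expected_error_bound
    {m n q : ℕ} (A : Matrix (Fin m) (Fin n) ℝ) (b : Fin m → ℝ)
    (xstar : Fin n → ℝ) (hxs : A.mulVec xstar = b) (hxs' : ∃ y, xstar = Aᵀ.mulVec y)
    {Ω : Type*} [MeasurableSpace Ω] (P : Measure Ω) [IsProbabilityMeasure P]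
    (S : Ω → Matrix (Fin m) (Fin q) ℝ)
    (hSmeas : ∀ i j, Measurable fun ω => S ω i j)
    (hSint : ∀ i j, Integrable (fun ω => (S ω * (S ω)ᵀ) i j) P)
    (H : Matrix (Fin m) (Fin m) ℝ)
    (hH : ∀ i j, H i j = ∫ ω, (S ω * (S ω)ᵀ) i j ∂P)
    (hHpd : H.PosDef)
    (lam : ℝ) (hlam : 0 < lam)
    (hlamb : ∀ᵐ ω ∂P, ∀ y : Fin n → ℝ,
      y ⬝ᵥ (Aᵀ * S ω * (S ω)ᵀ * A).mulVec y ≤ lam * (y ⬝ᵥ y))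
    (x : Fin n → ℝ) (hx : ∃ y, x = Aᵀ.mulVec y)
    (d : Fin n → ℝ)
    (hae : ∀ᵐ ω ∂P, sres A b (S ω) x ≠ 0 ∧
      LinearIndependent ℝ ![sgrad A b (S ω) x, d])
    (xt u : Ω → Fin n → ℝ)
    (hxt : ∀ ω, xt ω = x - Lad A b (S ω) x • sgrad A b (S ω) x)
    (hu : ∀ ω, u ω = (sgrad A b (S ω) x ⬝ᵥ d) • sgrad A b (S ω) x -
      (sgrad A b (S ω) x ⬝ᵥ sgrad A b (S ω) x) • d)
    (xplus : Ω → Fin n → ℝ)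
    (hxpmeas : ∀ i, Measurable fun ω => xplus ω i)
    (hproj : ∀ᵐ ω ∂P,
      (∃ α β : ℝ, xplus ω = x + α • sgrad A b (S ω) x + β • d) ∧
      ∀ α β : ℝ, (xplus ω - xstar) ⬝ᵥ (xplus ω - xstar) ≤
        ((x + α • sgrad A b (S ω) x + β • d) - xstar) ⬝ᵥ
          ((x + α • sgrad A b (S ω) x + β • d) - xstar))
    (γ : ℝ) (hγ : γ ∈ Set.Icc (0 : ℝ) 1)
    (hγae : ∀ᵐ ω ∂P,
      γ * (((xt ω - xstar) ⬝ᵥ (xt ω - xstar)) * (u ω ⬝ᵥ u ω)) ≤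
        ((xt ω - xstar) ⬝ᵥ u ω) ^ 2)
    (σ2 : ℝ)
    (hσ2 : σ2 = sInf {r : ℝ | ∃ v : Fin n → ℝ, (∃ y, v = Aᵀ.mulVec y) ∧ v ⬝ᵥ v = 1 ∧
      r = ((posSemidefSqrt hHpd.posSemidef * A).mulVec v) ⬝ᵥ ((posSemidefSqrt hHpd.posSemidef * A).mulVec v)}) :
    ∫ ω, (xplus ω - xstar) ⬝ᵥ (xplus ω - xstar) ∂P ≤
      (1 - γ) * (1 - σ2 / lam) * ((x - xstar) ⬝ᵥ (x - xstar)) :=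
  ashbm_one_step_expected_error_bound_general A b xstar hxs hxs' P S hSint H hH hHpd lam hlam hlamb
    x hx d hae xt u hxt hu xplus hproj γ hγ hγae σ2 hσ2
end
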